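/- arXiv:1702.03918 — 4 statements merged into one kernel-verified Lean document; each statement's English description precedes it below -/
import Mathlib

section
/- The kernel of the homomorphism $\pi':FB_n\to\mathfrak{S}_n$ sending $\sigma_i$ to the transposition $(i,i+1)$ and each $\tau_i$ to the identity is isomorphic to the direct product $\mathbb{Z}^n\times P_n$, where $P_n$ is the pure braid group (the kernel of the standard projection $B_n\to\mathfrak{S}_n$). -/
/-! Framed braid group `FB_n` and braid group `B_n` as presented groups, and the
pure framed braid group as the kernel of the projection to the symmetric group. -/

/-- The braid relations on generators `σ_1, …, σ_{n-1}`. -/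
def braidRels (n : ℕ) : Set (FreeGroup (Fin (n - 1))) :=
  {w | (∃ i j : Fin (n - 1), (i : ℕ) + 1 = (j : ℕ) ∧
          w = .of i * .of j * .of i * (.of j * .of i * .of j)⁻¹) ∨
       (∃ i j : Fin (n - 1), (i : ℕ) + 2 ≤ (j : ℕ) ∧
          w = .of i * .of j * (.of j * .of i)⁻¹)}

/-- The braid group `B_n`. -/
abbrev BraidGroup (n : ℕ) := PresentedGroup (braidRels n)

/-- The generator `σ_i` of the braid group. -/
def bσ {n : ℕ} (i : Fin (n - 1)) : BraidGroup n := PresentedGroup.of i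

/-- `i` as an element of `Fin n` (the index `i`). -/
def lo {n : ℕ} (i : Fin (n - 1)) : Fin n := ⟨i.1, by have := i.2; omega⟩

/-- `i+1` as an element of `Fin n` (the index `i+1`). -/
def hi {n : ℕ} (i : Fin (n - 1)) : Fin n := ⟨i.1 + 1, by have := i.2; omega⟩

/-- The defining relations of the framed braid group, on generators
`σ_i = .inl i` and `τ_j = .inr j`. -/
def framedRels (n : ℕ) : Set (FreeGroup (Fin (n - 1) ⊕ Fin n)) :=
  {w | (∃ i j : Fin (n - 1), (i : ℕ) + 1 = (j : ℕ) ∧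
          w = .of (.inl i) * .of (.inl j) * .of (.inl i) *
              (.of (.inl j) * .of (.inl i) * .of (.inl j))⁻¹) ∨
       (∃ i j : Fin (n - 1), (i : ℕ) + 2 ≤ (j : ℕ) ∧
          w = .of (.inl i) * .of (.inl j) * (.of (.inl j) * .of (.inl i))⁻¹) ∨
       (∃ i j : Fin n,
          w = .of (.inr i) * .of (.inr j) * (.of (.inr j) * .of (.inr i))⁻¹) ∨
       (∃ i : Fin (n - 1),
          w = .of (.inl i) * .of (.inr (lo i)) * (.of (.inr (hi i)) * .of (.inl i))⁻¹) ∨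
       (∃ i : Fin (n - 1),
          w = .of (.inl i) * .of (.inr (hi i)) * (.of (.inr (lo i)) * .of (.inl i))⁻¹) ∨
       (∃ (i : Fin (n - 1)) (j : Fin n), j ≠ lo i ∧ j ≠ hi i ∧
          w = .of (.inl i) * .of (.inr j) * (.of (.inr j) * .of (.inl i))⁻¹)}

/-- The framed braid group `FB_n`. -/
abbrev FramedBraidGroup (n : ℕ) := PresentedGroup (framedRels n)

/-- The generator `σ_i` of the framed braid group. -/
def fσ {n : ℕ} (i : Fin (n - 1)) : FramedBraidGroup n := PresentedGroup.of (.inl i)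

/-- The generator `τ_j` of the framed braid group. -/
def fτ {n : ℕ} (j : Fin n) : FramedBraidGroup n := PresentedGroup.of (.inr j)

/-!
Sending `σ_i ↦ σ_i` and `τ_j ↦ e_j` identifies `FB_n` with the semidirect product `ℤⁿ ⋊ B_n` in
which `B_n` permutes the coordinates of `ℤⁿ` through `π : B_n → 𝔖_n`: the relations
`σ_i τ_j = τ_{σ_i(j)} σ_i` are exactly the commutation rules of that semidirect product. Under this
identification `π'` becomes the projection onto `B_n` followed by `π`. Over `P_n = ker π` the
action on `ℤⁿ` is trivial, so the kernel of `π'` is the direct product `ℤⁿ × P_n`.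
-/

open SemidirectProduct

theorem mulAutArrow_mulSingle {G A M : Type*} [Group G] [MulAction G A] [DecidableEq A]
    [Monoid M] (g : G) (a : A) (x : M) :
    mulAutArrow g (Pi.mulSingle a x : A → M) = Pi.mulSingle (g • a) x := by
  ext b
  change (Pi.mulSingle a x : A → M) (g⁻¹ • b) = _
  simp only [Pi.mulSingle_apply, inv_smul_eq_iff]

def MonoidHom.kerCompMulEquiv {G G' H : Type*} [Group G] [Group G'] [Group H] (f : G' →* H)
    (e : G ≃* G') : (f.comp e.toMonoidHom).ker ≃* f.ker :=
  (e.subgroupMap _).trans <| MulEquiv.subgroupCongr <|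
    Subgroup.map_comap_eq_self_of_surjective e.surjective f.ker

namespace SemidirectProduct

variable {N G H : Type*} [Group N] [Group G] [Group H]

theorem inr_mul_inl {φ : G →* MulAut N} (g : G) (v : N) :
    (inr g : N ⋊[φ] G) * inl v = inl (φ g v) * inr g := by
  rw [inl_aut, map_inv, inv_mul_cancel_right]

theorem lift_compat_of_closure_eq_top {φ : G →* MulAut N} (f₁ : N →* H) (f₂ : G →* H)
    {S : Set G} (hS : Subgroup.closure S = ⊤)
    (h : ∀ s ∈ S, ∀ v, f₁ (φ s v) = f₂ s * f₁ v * (f₂ s)⁻¹) (g : G) :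
    f₁.comp (φ g).toMonoidHom = (MulAut.conj (f₂ g)).toMonoidHom.comp f₁ := by
  ext v
  simp only [MonoidHom.comp_apply, MulEquiv.coe_toMonoidHom, MulAut.conj_apply]
  have hg : g ∈ Subgroup.closure S := hS ▸ Subgroup.mem_top g
  induction hg using Subgroup.closure_induction generalizing v with
  | mem s hs => exact h s hs v
  | one => simp
  | mul x y _ _ hx hy => simp only [map_mul, MulAut.mul_apply, hx, hy]; group
  | inv x _ hx =>
    have := hx ((φ x)⁻¹ v)
    rw [MulAut.apply_inv_self] at this
    rw [map_inv, this, map_inv]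
    group

def kerCompRightHomEquiv (φ : H →* MulAut N) (ψ : G →* H) :
    (ψ.comp (rightHom : N ⋊[φ.comp ψ] G →* G)).ker ≃* N × ψ.ker where
  toFun p := (p.1.left, ⟨p.1.right, p.2⟩)
  invFun q := ⟨⟨q.1, q.2.1⟩, q.2.2⟩
  left_inv _ := rfl
  right_inv _ := rfl
  map_mul' p q := by
    have hp : ψ p.1.right = 1 := p.2
    ext
    · simp [hp]
    · rfl

theorem inr_mul_inl_mulSingle {A M P : Type*} [DecidableEq A] [Group M] [Group P]
    [MulAction P A] (ρ : G →* P) (g : G) (a : A) (x : M) :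
    (inr g : (A → M) ⋊[mulAutArrow.comp ρ] G) * inl (Pi.mulSingle a x) =
      inl (Pi.mulSingle (ρ g • a) x) * inr g := by
  rw [inr_mul_inl, MonoidHom.comp_apply, mulAutArrow_mulSingle]

end SemidirectProduct

namespace BraidGroup

variable {n : ℕ}

theorem bσ_mul_bσ_mul_bσ {i j : Fin (n - 1)} (h : (i : ℕ) + 1 = j) :
    bσ i * bσ j * bσ i = bσ j * bσ i * bσ j :=
  PresentedGroup.mk_eq_mk_of_mul_inv_mem (Or.inl ⟨i, j, h, rfl⟩)

theorem bσ_mul_bσ_comm {i j : Fin (n - 1)} (h : (i : ℕ) + 2 ≤ j) :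
    bσ i * bσ j = bσ j * bσ i :=
  PresentedGroup.mk_eq_mk_of_mul_inv_mem (Or.inr ⟨i, j, h, rfl⟩)

end BraidGroup

namespace FramedBraidGroup

variable {n : ℕ}

theorem fτ_commute (i j : Fin n) : Commute (fτ i) (fτ j) :=
  PresentedGroup.mk_eq_mk_of_mul_inv_mem (Or.inr (Or.inr (Or.inl ⟨i, j, rfl⟩)))

theorem fσ_mul_fτ (i : Fin (n - 1)) (j : Fin n) :
    fσ i * fτ j = fτ (Equiv.swap (lo i) (hi i) j) * fσ i := by
  apply PresentedGroup.mk_eq_mk_of_mul_inv_mem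
  rcases eq_or_ne j (lo i) with rfl | hlo
  · rw [Equiv.swap_apply_left]
    exact Or.inr (Or.inr (Or.inr (Or.inl ⟨i, rfl⟩)))
  rcases eq_or_ne j (hi i) with rfl | hhi
  · rw [Equiv.swap_apply_right]
    exact Or.inr (Or.inr (Or.inr (Or.inr (Or.inl ⟨i, rfl⟩))))
  · rw [Equiv.swap_apply_of_ne_of_ne hlo hhi]
    exact Or.inr (Or.inr (Or.inr (Or.inr (Or.inr ⟨i, j, hlo, hhi, rfl⟩))))

def ofBraid : BraidGroup n →* FramedBraidGroup n :=
  PresentedGroup.map (FreeGroup.map Sum.inl) (by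
    rintro _ (⟨i, j, h, rfl⟩ | ⟨i, j, h, rfl⟩)
    · exact Or.inl ⟨i, j, h, by simp⟩
    · exact Or.inr (Or.inl ⟨i, j, h, by simp⟩))

theorem ofBraid_bσ (i : Fin (n - 1)) : ofBraid (bσ i) = fσ i := rfl

def framingHom : (Fin n → Multiplicative ℤ) →* FramedBraidGroup n :=
  MonoidHom.noncommPiCoprod (fun j ↦ zpowersHom _ (fτ j))
    fun i j _ x y ↦ (fτ_commute i j).zpow_zpow x.toAdd y.toAdd

theorem framingHom_mulSingle (j : Fin n) (x : Multiplicative ℤ) :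
    framingHom (Pi.mulSingle j x) = fτ j ^ x.toAdd :=
  MonoidHom.noncommPiCoprod_mulSingle _ _ _

theorem framingHom_mulAutArrow_swap (i : Fin (n - 1)) (v : Fin n → Multiplicative ℤ) :
    framingHom (mulAutArrow (Equiv.swap (lo i) (hi i)) v) = fσ i * framingHom v * (fσ i)⁻¹ := by
  suffices framingHom.comp (mulAutArrow (Equiv.swap (lo i) (hi i))).toMonoidHom =
      (MulAut.conj (fσ i)).toMonoidHom.comp framingHom from DFunLike.congr_fun this v
  refine MonoidHom.pi_ext fun j x ↦ ?_
  simp only [MonoidHom.comp_apply, MulEquiv.coe_toMonoidHom, MulAut.conj_apply,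
    mulAutArrow_mulSingle, Equiv.Perm.smul_def, framingHom_mulSingle, ← conj_zpow,
    fσ_mul_fτ, mul_inv_cancel_right]

variable (π : BraidGroup n →* Equiv.Perm (Fin n))
  (hπ : ∀ i : Fin (n - 1), π (bσ i) = Equiv.swap (lo i) (hi i))

def toSemidirect :
    FramedBraidGroup n →* (Fin n → Multiplicative ℤ) ⋊[mulAutArrow.comp π] BraidGroup n :=
  PresentedGroup.toGroup
    (f := Sum.elim (inr ∘ bσ) fun j ↦ inl (Pi.mulSingle j (Multiplicative.ofAdd (1 : ℤ)))) (by
      rintro _ (⟨i, j, h, rfl⟩ | ⟨i, j, h, rfl⟩ | ⟨i, j, rfl⟩ | ⟨i, rfl⟩ | ⟨i, rfl⟩ |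
        ⟨i, j, hlo, hhi, rfl⟩) <;>
        simp only [map_mul, map_inv, FreeGroup.lift_apply_of, Sum.elim_inl, Sum.elim_inr,
          Function.comp_apply, mul_inv_eq_one]
      · simp only [← map_mul, BraidGroup.bσ_mul_bσ_mul_bσ h]
      · simp only [← map_mul, BraidGroup.bσ_mul_bσ_comm h]
      · rw [← map_mul, ← map_mul, mul_comm]
      all_goals
        rw [inr_mul_inl_mulSingle, hπ, Equiv.Perm.smul_def]
      · rw [Equiv.swap_apply_left]
      · rw [Equiv.swap_apply_right]
      · rw [Equiv.swap_apply_of_ne_of_ne hlo hhi])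

theorem toSemidirect_fσ (i : Fin (n - 1)) : toSemidirect π hπ (fσ i) = inr (bσ i) :=
  PresentedGroup.toGroup.of _

theorem toSemidirect_fτ (j : Fin n) :
    toSemidirect π hπ (fτ j) = inl (Pi.mulSingle j (Multiplicative.ofAdd (1 : ℤ))) :=
  PresentedGroup.toGroup.of _

def ofSemidirect :
    (Fin n → Multiplicative ℤ) ⋊[mulAutArrow.comp π] BraidGroup n →* FramedBraidGroup n :=
  lift framingHom ofBraid <|
    lift_compat_of_closure_eq_top _ _ (PresentedGroup.closure_range_of _) <|
      Set.forall_mem_range.2 fun i v ↦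
        (congr_arg (fun p ↦ framingHom (mulAutArrow p v)) (hπ i)).trans
          (framingHom_mulAutArrow_swap i v)

theorem ofSemidirect_comp_toSemidirect :
    (ofSemidirect π hπ).comp (toSemidirect π hπ) = MonoidHom.id _ := by
  refine PresentedGroup.ext fun x ↦ ?_
  rcases x with i | j
  · change ofSemidirect π hπ (toSemidirect π hπ (fσ i)) = fσ i
    rw [toSemidirect_fσ, ofSemidirect, lift_inr, ofBraid_bσ]
  · change ofSemidirect π hπ (toSemidirect π hπ (fτ j)) = fτ j
    rw [toSemidirect_fτ, ofSemidirect, lift_inl, framingHom_mulSingle, toAdd_ofAdd, zpow_one]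

theorem toSemidirect_comp_ofSemidirect :
    (toSemidirect π hπ).comp (ofSemidirect π hπ) = MonoidHom.id _ := by
  refine hom_ext (MonoidHom.pi_ext fun j x ↦ ?_) (PresentedGroup.ext fun i ↦ ?_)
  · change toSemidirect π hπ (ofSemidirect π hπ (inl (Pi.mulSingle j x))) = inl (Pi.mulSingle j x)
    rw [ofSemidirect, lift_inl, framingHom_mulSingle, map_zpow, toSemidirect_fτ, ← map_zpow,
      ← Pi.mulSingle_zpow, ← ofAdd_zsmul, smul_eq_mul, mul_one, ofAdd_toAdd]
  · change toSemidirect π hπ (ofSemidirect π hπ (inr (bσ i))) = inr (bσ i)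
    rw [ofSemidirect, lift_inr, ofBraid_bσ, toSemidirect_fσ]

def equivSemidirect :
    FramedBraidGroup n ≃* (Fin n → Multiplicative ℤ) ⋊[mulAutArrow.comp π] BraidGroup n :=
  MonoidHom.toMulEquiv _ _ (ofSemidirect_comp_toSemidirect π hπ)
    (toSemidirect_comp_ofSemidirect π hπ)

theorem eq_comp_equivSemidirect (π' : FramedBraidGroup n →* Equiv.Perm (Fin n))
    (hσ : ∀ i : Fin (n - 1), π' (fσ i) = Equiv.swap (lo i) (hi i))
    (hτ : ∀ j : Fin n, π' (fτ j) = 1) :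
    π' = (π.comp rightHom).comp (equivSemidirect π hπ).toMonoidHom := by
  refine PresentedGroup.ext fun x ↦ ?_
  rcases x with i | j
  · change π' (fσ i) = π (rightHom (toSemidirect π hπ (fσ i)))
    rw [hσ, toSemidirect_fσ, rightHom_inr, hπ]
  · change π' (fτ j) = π (rightHom (toSemidirect π hπ (fτ j)))
    rw [hτ, toSemidirect_fτ, rightHom_inl, map_one]

end FramedBraidGroup

/-- the kernel of `π' : FB_n → S_n` (sending `σ_i` to the transposition
`(i, i+1)` and each `τ_j` to the identity) is isomorphic to `ℤ^n × P_n`, where `P_n` is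
the pure braid group, i.e. the kernel of the standard projection `B_n → S_n`. -/
theorem stmt_4 (n : ℕ)
    (π' : FramedBraidGroup n →* Equiv.Perm (Fin n))
    (hσ : ∀ i : Fin (n - 1), π' (fσ i) = Equiv.swap (lo i) (hi i))
    (hτ : ∀ j : Fin n, π' (fτ j) = 1)
    (π : BraidGroup n →* Equiv.Perm (Fin n))
    (hπ : ∀ i : Fin (n - 1), π (bσ i) = Equiv.swap (lo i) (hi i)) :
    Nonempty (π'.ker ≃* (Fin n → Multiplicative ℤ) × π.ker) := by
  rw [FramedBraidGroup.eq_comp_equivSemidirect π hπ π' hσ hτ]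
  exact ⟨(MonoidHom.kerCompMulEquiv _ _).trans (SemidirectProduct.kerCompRightHomEquiv _ π)⟩
end

section
/- Let $V$ be a representation of $\mathfrak{sl}_2$-type operators: suppose $e,f,x$ act on $V$ with $x$ a nonzero scalar, and suppose an operator $\partial_f$ satisfies $[\partial_f,f]=1$, $[f\partial_f,e]=0$, and for each $v$ there is $k_0$ with $(fe)^kv=0$ for $k\ge k_0$. Then the operator $L=\exp(-fe/x)$ is well-defined, invertible, and for any $v$ with $\partial_f v=0$, the vector $L(v)$ satisfies $(e+x\partial_f)L(v)=0$. -/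
/-!
Since `fe` is locally nilpotent, every formal power series `p` acts on `V`: on a vector killed
by `(fe)^n` it acts through its truncation mod `X^n`, and this action is multiplicative. `L` is the
action of `exp(-t/x)`, with inverse the action of `exp(t/x)`. The commutation relations give
`∂_f (fe) = e (f ∂_f + 1)`, hence `∂_f ∘ p(fe) = e ∘ p'(fe)` on `ker ∂_f`; for `p = exp(-t/x)`
we have `p' = -p/x`, which is the claimed identity.
-/

open Finset Polynomial PowerSeries

namespace Module.End

variable {R V : Type*} [CommRing R] [AddCommGroup V] [Module R V]

def IsLocallyNilpotent (T : Module.End R V) : Prop := ∀ v, ∃ n, (T ^ n) v = 0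

section PolynomialAction

variable {T : Module.End R V} {v : V} {n : ℕ}

lemma pow_apply_aeval_apply_eq_zero (hv : (T ^ n) v = 0) (P : R[X]) :
    (T ^ n) (aeval T P v) = 0 := by
  rw [← mul_apply, ← aeval_X_pow (R := R), ← map_mul, mul_comm, map_mul, mul_apply,
    aeval_X_pow, hv, map_zero]

lemma aeval_apply_eq_of_coeff_eq (hv : (T ^ n) v = 0) {P Q : R[X]}
    (hPQ : ∀ k < n, P.coeff k = Q.coeff k) : aeval T P v = aeval T Q v := by
  obtain ⟨S, hS⟩ : (Polynomial.X : R[X]) ^ n ∣ P - Q := by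
    rw [Polynomial.X_pow_dvd_iff]
    intro k hk
    rw [Polynomial.coeff_sub, hPQ k hk, sub_self]
  rw [← sub_eq_zero, ← LinearMap.sub_apply, ← map_sub, hS, mul_comm, map_mul, mul_apply,
    map_pow, aeval_X, hv, map_zero]

lemma aeval_trunc_apply_eq {m : ℕ} (hm : (T ^ m) v = 0) (hn : (T ^ n) v = 0)
    (p : R⟦X⟧) : aeval T (trunc m p) v = aeval T (trunc n p) v := by
  refine aeval_apply_eq_of_coeff_eq (n := min m n) ?_ fun k hk => ?_
  · rcases min_choice m n with h | h <;> rwa [h]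
  · rw [coeff_trunc, coeff_trunc, if_pos (hk.trans_le (min_le_left m n)),
      if_pos (hk.trans_le (min_le_right m n))]

lemma aeval_trunc_apply_eq_sum (p : R⟦X⟧) :
    aeval T (trunc n p) v = ∑ k ∈ range n, coeff k p • (T ^ k) v := by
  rw [aeval_def, eval₂_trunc_eq_sum_range, LinearMap.sum_apply]
  simp only [← Algebra.smul_def, LinearMap.smul_apply]

end PolynomialAction

namespace IsLocallyNilpotent

variable {T : Module.End R V} (hT : T.IsLocallyNilpotent)

noncomputable def evalPowerSeries (p : R⟦X⟧) : Module.End R V where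
  toFun v := aeval T (trunc (hT v).choose p) v
  map_add' v w := by
    obtain ⟨m, hm⟩ := hT v
    obtain ⟨n, hn⟩ := hT w
    have hv : (T ^ (m + n)) v = 0 := pow_map_zero_of_le (Nat.le_add_right m n) hm
    have hw : (T ^ (m + n)) w = 0 := pow_map_zero_of_le (Nat.le_add_left n m) hn
    rw [aeval_trunc_apply_eq (hT _).choose_spec (by rw [map_add, hv, hw, add_zero]),
      aeval_trunc_apply_eq (hT v).choose_spec hv, aeval_trunc_apply_eq (hT w).choose_spec hw,
      map_add]
  map_smul' r v := by
    rw [aeval_trunc_apply_eq (hT _).choose_spec (by rw [map_smul, (hT v).choose_spec, smul_zero]),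
      map_smul, RingHom.id_apply]

lemma evalPowerSeries_apply {v : V} {n : ℕ} (hv : (T ^ n) v = 0) (p : R⟦X⟧) :
    hT.evalPowerSeries p v = aeval T (trunc n p) v :=
  aeval_trunc_apply_eq (hT v).choose_spec hv p

lemma evalPowerSeries_apply_eq_sum {v : V} {n : ℕ} (hv : (T ^ n) v = 0) (p : R⟦X⟧) :
    hT.evalPowerSeries p v = ∑ k ∈ range n, coeff k p • (T ^ k) v := by
  rw [evalPowerSeries_apply hT hv, aeval_trunc_apply_eq_sum]

lemma evalPowerSeries_one : hT.evalPowerSeries 1 = 1 := by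
  ext v
  obtain ⟨n, hn⟩ := hT v
  rw [evalPowerSeries_apply hT (pow_map_zero_of_le n.le_succ hn), trunc_one, map_one]

lemma evalPowerSeries_smul (r : R) (p : R⟦X⟧) :
    hT.evalPowerSeries (r • p) = r • hT.evalPowerSeries p := by
  ext v
  obtain ⟨n, hn⟩ := hT v
  rw [LinearMap.smul_apply, evalPowerSeries_apply hT hn, evalPowerSeries_apply hT hn, map_smul,
    map_smul, LinearMap.smul_apply]

lemma evalPowerSeries_mul (p q : R⟦X⟧) :
    hT.evalPowerSeries (p * q) = hT.evalPowerSeries p * hT.evalPowerSeries q := by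
  ext v
  obtain ⟨n, hn⟩ := hT v
  rw [mul_apply, evalPowerSeries_apply hT hn, evalPowerSeries_apply hT hn,
    evalPowerSeries_apply hT (pow_apply_aeval_apply_eq_zero hn _), ← mul_apply, ← map_mul]
  refine aeval_apply_eq_of_coeff_eq hn fun k hk => ?_
  rw [← Polynomial.coeff_coe, ← Polynomial.coeff_coe, coeff_coe_trunc_of_lt hk, Polynomial.coe_mul,
    coeff_mul_eq_coeff_trunc_mul_trunc p q hk]

end IsLocallyNilpotent

section Commutation

variable {e f D : Module.End R V} (hDf : D * f - f * D = 1) (hfDe : f * D * e = e * (f * D))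
include hDf hfDe

lemma mul_mul_eq_of_commutator : D * (f * e) = e * (f * D) + e := by
  rw [← mul_assoc, sub_eq_iff_eq_add.mp hDf, add_mul, one_mul, hfDe, add_comm]

lemma apply_pow_succ_apply_of_apply_eq_zero {v : V} (hv : D v = 0) (k : ℕ) :
    D (((f * e) ^ (k + 1)) v) = (k + 1 : R) • e (((f * e) ^ k) v) := by
  induction k with
  | zero =>
    rw [zero_add, pow_one, pow_zero, one_apply, ← mul_apply, mul_mul_eq_of_commutator hDf hfDe,
      LinearMap.add_apply, mul_apply, mul_apply, hv, map_zero, map_zero, zero_add, Nat.cast_zero,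
      zero_add, one_smul]
  | succ k ih =>
    rw [pow_succ', mul_apply, ← mul_apply D, mul_mul_eq_of_commutator hDf hfDe,
      LinearMap.add_apply, mul_apply, mul_apply, ih, map_smul, ← mul_apply f e, ← mul_apply,
      ← pow_succ', map_smul]
    module

lemma apply_aeval_apply_of_apply_eq_zero {v : V} (hv : D v = 0) (P : R[X]) :
    D (aeval (f * e) P v) = e (aeval (f * e) (derivative P) v) := by
  induction P using Polynomial.induction_on' with
  | add P Q hP hQ => simp only [map_add, LinearMap.add_apply, hP, hQ]
  | monomial k c =>
    rcases k with _ | k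
    · simp [hv]
    · rw [derivative_monomial, aeval_monomial, aeval_monomial, Nat.add_sub_cancel,
        ← Algebra.smul_def, ← Algebra.smul_def]
      simp only [LinearMap.smul_apply, map_smul, apply_pow_succ_apply_of_apply_eq_zero hDf hfDe hv,
        smul_smul, Nat.cast_succ]

end Commutation

lemma apply_evalPowerSeries_apply_of_apply_eq_zero {e f D : Module.End R V}
    (hDf : D * f - f * D = 1) (hfDe : f * D * e = e * (f * D)) (hT : (f * e).IsLocallyNilpotent)
    {v : V} (hv : D v = 0) (p : R⟦X⟧) :
    D (hT.evalPowerSeries p v) = e (hT.evalPowerSeries (d⁄dX R p) v) := by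
  obtain ⟨n, hn⟩ := hT v
  rw [hT.evalPowerSeries_apply (pow_map_zero_of_le n.le_succ hn),
    apply_aeval_apply_of_apply_eq_zero hDf hfDe hv, ← trunc_derivative,
    ← hT.evalPowerSeries_apply hn]

end Module.End

lemma PowerSeries.derivative_rescale {R : Type*} [CommRing R] (a : R) (p : R⟦X⟧) :
    d⁄dX R (rescale a p) = a • rescale a (d⁄dX R p) := by
  ext n
  simp only [coeff_derivative, coeff_rescale, coeff_smul, smul_eq_mul, pow_succ]
  ring

/-- if `e, f, ∂_f` act on `V`, `x` is a nonzero scalar, `[∂_f, f] = 1`,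
`[f∂_f, e] = 0`, and `fe` is locally nilpotent, then `L = exp(-fe/x)` is well-defined,
invertible, and `∂_f v = 0` implies `(e + x ∂_f)(L v) = 0`. -/
theorem stmt_9 (V : Type*) [AddCommGroup V] [Module ℂ V]
    (e f df : Module.End ℂ V) (x : ℂ) (hx : x ≠ 0)
    (hdff : df * f - f * df = 1)
    (hcomm : (f * df) * e = e * (f * df))
    (hnil : ∀ v : V, ∃ k₀ : ℕ, ∀ k, k₀ ≤ k → ((f * e) ^ k) v = 0) :
    ∃ L : V →ₗ[ℂ] V,
      (∀ (v : V) (k₀ : ℕ), (∀ k, k₀ ≤ k → ((f * e) ^ k) v = 0) →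
        L v = ∑ k ∈ Finset.range k₀,
          (((-1 : ℂ) ^ k / (k.factorial * x ^ k))) • ((f * e) ^ k) v) ∧
      Function.Bijective L ∧
      (∀ v : V, df v = 0 → e (L v) + x • df (L v) = 0) := by
  have hT : (f * e).IsLocallyNilpotent := fun v => (hnil v).imp fun k₀ h => h k₀ le_rfl
  have hexp (a b : ℂ) (hab : a + b = 0) :
      hT.evalPowerSeries (rescale a (exp ℂ)) * hT.evalPowerSeries (rescale b (exp ℂ)) = 1 := by
    rw [← hT.evalPowerSeries_mul, exp_mul_exp_eq_exp_add, hab, rescale_zero_apply,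
      constantCoeff_exp, map_one, hT.evalPowerSeries_one]
  refine ⟨hT.evalPowerSeries (rescale (-x⁻¹) (exp ℂ)), fun v k₀ hk₀ => ?_,
    Function.bijective_iff_has_inverse.mpr ⟨hT.evalPowerSeries (rescale x⁻¹ (exp ℂ)),
      fun v => LinearMap.congr_fun (hexp _ _ (add_neg_cancel x⁻¹)) v,
      fun v => LinearMap.congr_fun (hexp _ _ (neg_add_cancel x⁻¹)) v⟩, fun v hv => ?_⟩
  · rw [hT.evalPowerSeries_apply_eq_sum (hk₀ k₀ le_rfl)]
    refine Finset.sum_congr rfl fun k _ => ?_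
    rw [coeff_rescale, coeff_exp, map_div₀, map_one, map_natCast, neg_pow, inv_pow]
    field_simp
  · rw [Module.End.apply_evalPowerSeries_apply_of_apply_eq_zero hdff hcomm hT hv,
      derivative_rescale, derivative_exp, hT.evalPowerSeries_smul, LinearMap.smul_apply, map_smul,
      smul_smul, mul_neg, mul_inv_cancel₀ hx, neg_one_smul, add_neg_cancel]
end

section
/- The dimension of the space of singular vectors $S^{(R)}_\Gamma[|\Lambda|-2m]$ of weight $|\Lambda|-2m$ in the tensor product $M^{(r_1)}_{\lambda_1}(\gamma_1)\otimes\cdots\otimes M^{(r_n)}_{\lambda_n}(\gamma_n)$ of confluent Verma modules equals $\binom{|R|+n+m-2}{m}$, where $|R|=r_1+\cdots+r_n$, provided $\gamma_1^{(r_1)}\ne 0$. -/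
/-!
Let `W k` be the span of the monomials `F^J v` with `|J| = k`; stars and bars gives
`dim W k = C(N + k - 1, k)` with `N = |R| + n`. Since `E v = 0`, `W 0` is singular, and for
`m ≥ 0` the map `E : W (m+1) → W m` is onto, so by rank–nullity and Pascal's rule the singular
space in degree `m + 1` has dimension `C(N + m, m + 1) - C(N + m - 1, m) = C(N + m - 1, m + 1)`.

Surjectivity is a triangularity argument. Put `x₀ = (1, r₁)` and call `∑ (rᵢ - p) J(i,p)` the depth
of `J`. Commuting `E` through the monomial produces the `H_{(i,p)}`, whose commutators with the
`F`'s raise the mode `p` and so lower the depth; as `H_{x₀}` acts on `v` by `γ₁^{(r₁)}`, this leaves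
`E F^{J + e_{x₀}} v = γ₁^{(r₁)} (J(x₀) + 1) F^J v` modulo monomials of smaller depth, or of the same
depth with fewer factors other than `F_{x₀}`.
-/

open Function Finset Submodule

section MultiIndex

variable {ι : Type*} [DecidableEq ι]

lemma update_succ_eq_add_single (J : ι → ℕ) (x : ι) :
    update J x (J x + 1) = J + Pi.single x 1 := by
  ext y
  by_cases hy : y = x
  · subst hy; simp
  · simp [hy]

lemma sum_add_single_one [Fintype ι] (J : ι → ℕ) (x : ι) :
    ∑ z, (J + Pi.single x 1 : ι → ℕ) z = ∑ z, J z + 1 := by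
  simp [Finset.sum_add_distrib]

lemma tsub_single_add_single {J : ι → ℕ} {x : ι} (hx : J x ≠ 0) :
    J - Pi.single x 1 + Pi.single x 1 = J := by
  ext z
  by_cases hz : z = x
  · subst hz; simp; omega
  · simp [hz]

lemma add_single_tsub_single_of_ne (J : ι → ℕ) {x y : ι} (hxy : y ≠ x) :
    J + Pi.single y 1 - Pi.single x 1 = J - Pi.single x 1 + Pi.single y 1 := by
  ext z
  by_cases hzx : z = x
  · subst hzx; simp [hxy.symm]
  · by_cases hzy : z = y
    · subst hzy; simp [hzx]
    · simp [hzx, hzy]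

theorem add_single_induction [Fintype ι] {P : (ι → ℕ) → Prop} (zero : P 0)
    (add_single : ∀ J x, P J → P (J + Pi.single x 1)) (J : ι → ℕ) : P J := by
  induction h : ∑ z, J z generalizing J with
  | zero =>
    obtain rfl : J = 0 := funext fun z => (Finset.sum_eq_zero_iff.1 h) z (mem_univ z)
    exact zero
  | succ d ih =>
    obtain ⟨x, -, hx⟩ := Finset.exists_ne_zero_of_sum_ne_zero (by omega : ∑ z, J z ≠ 0)
    rw [← tsub_single_add_single hx]
    refine add_single _ x (ih _ ?_)
    have := sum_add_single_one (J - Pi.single x 1) x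
    rw [tsub_single_add_single hx] at this
    omega

lemma finite_setOf_sum_eq [Fintype ι] (k : ℕ) : {J : ι → ℕ | ∑ z, J z = k}.Finite :=
  Set.finite_coe_iff.1 (Finite.of_equiv _ (Sym.equivNatSumOfFintype ι k))

theorem finrank_span_image_setOf_sum_eq [Fintype ι] {K V : Type*} [DivisionRing K]
    [AddCommGroup V] [Module K V] {b : (ι → ℕ) → V} (hb : LinearIndependent K b) (k : ℕ) :
    Module.finrank K (span K (b '' {J | ∑ z, J z = k})) = (Fintype.card ι + k - 1).choose k := by
  let e := Sym.equivNatSumOfFintype ι k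
  have : Fintype {J : ι → ℕ // ∑ z, J z = k} := Fintype.ofEquiv _ e
  have h := finrank_span_eq_card (hb.comp _ (Subtype.val_injective (p := (∑ z, · z = k))))
  rw [Set.range_comp, Subtype.range_coe_subtype] at h
  rw [h, ← Fintype.card_congr e, Sym.card_sym_eq_choose]

end MultiIndex

lemma span_setOf_sum_eq_zero_le_ker {ι K V : Type*} [Fintype ι] [Semiring K]
    [AddCommMonoid V] [Module K V] {E : V →ₗ[K] V} {b : (ι → ℕ) → V} (hb : E (b 0) = 0) :
    span K (b '' {J | ∑ z, J z = 0}) ≤ LinearMap.ker E := by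
  rw [span_le]
  rintro - ⟨J, hJ, rfl⟩
  obtain rfl : J = 0 := funext fun z => (Finset.sum_eq_zero_iff.1 hJ) z (mem_univ z)
  exact hb

lemma Nat.choose_add_succ_sub_one {N : ℕ} (hN : 2 ≤ N) (m : ℕ) :
    (N + (m + 1) - 1).choose (m + 1) = (N + m - 1).choose m + (N + (m + 1) - 2).choose (m + 1) := by
  obtain ⟨k, rfl⟩ := Nat.exists_eq_add_of_le' hN
  rw [show k + 2 + (m + 1) - 1 = k + m + 1 + 1 by omega, Nat.choose_succ_succ',
    show k + 2 + m - 1 = k + m + 1 by omega, show k + 2 + (m + 1) - 2 = k + m + 1 by omega]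

theorem Submodule.finrank_map_add_finrank_inf_ker {K V W : Type*} [DivisionRing K]
    [AddCommGroup V] [Module K V] [AddCommGroup W] [Module K W] (f : V →ₗ[K] W)
    (U : Submodule K V) [FiniteDimensional K U] :
    Module.finrank K (U.map f) + Module.finrank K ↥(U ⊓ LinearMap.ker f) =
      Module.finrank K U := by
  rw [← (comapSubtypeEquivOfLe inf_le_left).finrank_eq, comap_inf, comap_subtype_self,
    top_inf_eq, ← LinearMap.ker_domRestrict, ← LinearMap.range_domRestrict]
  exact (f.domRestrict U).finrank_range_add_finrank_ker

theorem Submodule.span_image_le_of_mem_sup_span_lt {R V α β : Type*} [Semiring R]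
    [AddCommMonoid V] [Module R V] [Preorder β] [WellFoundedLT β] {P : Submodule R V}
    {b : α → V} {S : Set α} (κ : α → β)
    (h : ∀ a ∈ S, b a ∈ P ⊔ span R (b '' {a' ∈ S | κ a' < κ a})) : span R (b '' S) ≤ P := by
  refine span_le.2 (Set.image_subset_iff.2 fun a => ?_)
  induction a using (InvImage.wf κ wellFounded_lt).induction with
  | _ a ih =>
    intro ha
    have hlower : span R (b '' {a' ∈ S | κ a' < κ a}) ≤ P :=
      span_le.2 (Set.image_subset_iff.2 fun a' ha' => ih a' ha'.2 ha'.1)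
    simpa [sup_eq_left.2 hlower] using h a ha

theorem Submodule.apply_mem_span_image_of_mapsTo {R M α : Type*} [Semiring R] [AddCommMonoid M]
    [Module R M] (f : M →ₗ[R] M) {b : α → M} {g : α → α} (hb : ∀ a, b (g a) = f (b a))
    {S T : Set α} (hST : Set.MapsTo g S T) {u : M} (hu : u ∈ span R (b '' S)) :
    f u ∈ span R (b '' T) := by
  have hle : (span R (b '' S)).map f ≤ span R (b '' T) := by
    rw [map_span, span_le]
    rintro - ⟨-, ⟨a, ha, rfl⟩, rfl⟩
    exact subset_span ⟨_, hST ha, hb a⟩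
  exact hle (mem_map_of_mem hu)

namespace ConfluentVerma

/-- `(i, p)` indexes `F_{(i,p)} = f ⊗ tᵖ` acting in the `i`-th tensor factor. -/
abbrev Mode {n : ℕ} (r : Fin n → ℕ) : Type := Σ i : Fin n, Fin (r i + 1)

variable {n : ℕ} {r : Fin n → ℕ}

def depth (r : Fin n → ℕ) (J : Mode r → ℕ) : ℕ :=
  (fun z : Mode r => r z.1 - z.2) ⬝ᵥ J

def key (r : Fin n → ℕ) (x₀ : Mode r) (J : Mode r → ℕ) : ℕ ×ₗ ℕ :=
  toLex (depth r J, (fun z => if z = x₀ then 0 else 1) ⬝ᵥ J)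

lemma depth_add_single (J : Mode r → ℕ) (x : Mode r) :
    depth r (J + Pi.single x 1) = depth r J + (r x.1 - x.2) := by
  simp [depth, dotProduct_add]

lemma key_add_single (x₀ : Mode r) (J : Mode r → ℕ) (x : Mode r) :
    key r x₀ (J + Pi.single x 1) =
      key r x₀ J + toLex (r x.1 - x.2, if x = x₀ then 0 else 1) := by
  simp [key, depth, dotProduct_add, ← toLex_add]

variable {V : Type*} [AddCommGroup V] [Module ℂ V] {E : Module.End ℂ V}
  {F H : Mode r → Module.End ℂ V} {v : V} {gam : Mode r → ℂ} {mono : (Mode r → ℕ) → V}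

lemma H_mono_sub_smul_mem (hHv : ∀ x, H x v = gam x • v)
    (hHF : ∀ (i j : Fin n) (p : Fin (r i + 1)) (q : Fin (r j + 1)),
      H ⟨i, p⟩ * F ⟨j, q⟩ - F ⟨j, q⟩ * H ⟨i, p⟩ =
        if h : i = j ∧ (p : ℕ) + (q : ℕ) ≤ r i then
          (-2 : ℂ) • F ⟨i, ⟨(p : ℕ) + (q : ℕ), Nat.lt_succ_of_le h.2⟩⟩
        else 0)
    (hmono0 : mono 0 = v)
    (hstep : ∀ (J : Mode r → ℕ) (x : Mode r), mono (J + Pi.single x 1) = F x (mono J))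
    (x : Mode r) (J : Mode r → ℕ) :
    H x (mono J) - gam x • mono J ∈
      span ℂ (mono '' {K | ∑ z, K z = ∑ z, J z ∧ depth r K + x.2 ≤ depth r J}) := by
  obtain ⟨i, p⟩ := x
  induction J using add_single_induction with
  | zero => simp [hmono0, hHv]
  | add_single J y ih =>
    obtain ⟨j, q⟩ := y
    simp only [sum_add_single_one, depth_add_single]
    set L := span ℂ (mono '' {K | ∑ z, K z = ∑ z, J z + 1 ∧
      depth r K + p ≤ depth r J + (r j - q)})
    have hF : F ⟨j, q⟩ (H ⟨i, p⟩ (mono J) - gam ⟨i, p⟩ • mono J) ∈ L := by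
      refine apply_mem_span_image_of_mapsTo _ (fun K => hstep K _) ?_ ih
      rintro K ⟨hdeg, hdepth⟩
      refine ⟨by rw [sum_add_single_one, hdeg], ?_⟩
      rw [depth_add_single]
      dsimp only at hdepth ⊢
      omega
    have hcomm : (H ⟨i, p⟩ * F ⟨j, q⟩ - F ⟨j, q⟩ * H ⟨i, p⟩) (mono J) ∈ L := by
      rw [hHF]
      split_ifs with h
      · obtain ⟨rfl, hpq⟩ := h
        rw [LinearMap.smul_apply, ← hstep]
        refine smul_mem _ _ (subset_span ⟨_, ⟨sum_add_single_one J _, ?_⟩, rfl⟩)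
        rw [depth_add_single]
        dsimp only
        omega
      · exact zero_mem _
    rw [hstep]
    convert add_mem hF hcomm using 1
    simp only [LinearMap.sub_apply, Module.End.mul_apply, map_sub, map_smul]
    abel

lemma E_mono_sub_smul_mem (hr : ∀ i, 0 < r i) (hEv : E v = 0)
    (hEF : ∀ x, E * F x - F x * E = H x) (hmono0 : mono 0 = v)
    (hstep : ∀ (J : Mode r → ℕ) (x : Mode r), mono (J + Pi.single x 1) = F x (mono J))
    (hH : ∀ x J, H x (mono J) - gam x • mono J ∈
      span ℂ (mono '' {K | ∑ z, K z = ∑ z, J z ∧ depth r K + x.2 ≤ depth r J}))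
    (x₀ : Mode r) (J : Mode r → ℕ) :
    E (mono J) - (gam x₀ * J x₀) • mono (J - Pi.single x₀ 1) ∈
      span ℂ (mono '' {K | ∑ z, K z + 1 = ∑ z, J z ∧ key r x₀ K < key r x₀ J}) := by
  induction J using add_single_induction with
  | zero => simp [hmono0, hEv]
  | add_single J y ih =>
    simp only [sum_add_single_one, add_left_inj]
    set L := span ℂ (mono '' {K | ∑ z, K z = ∑ z, J z ∧
      key r x₀ K < key r x₀ (J + Pi.single y 1)})
    have hE : E (mono (J + Pi.single y 1)) = F y (E (mono J)) + H y (mono J) := by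
      rw [hstep, ← hEF y, LinearMap.sub_apply, Module.End.mul_apply, Module.End.mul_apply]
      abel
    have hF : F y (E (mono J) - (gam x₀ * J x₀) • mono (J - Pi.single x₀ 1)) ∈ L := by
      refine apply_mem_span_image_of_mapsTo _ (fun K => hstep K y) ?_ ih
      rintro K ⟨hdeg, hkey⟩
      refine ⟨by rw [sum_add_single_one, hdeg], ?_⟩
      rw [key_add_single, key_add_single]
      exact add_lt_add_left hkey _
    have hHJ : H y (mono J) - gam y • mono J ∈ L := by
      refine span_mono (Set.image_mono ?_) (hH y J)
      rintro K ⟨hdeg, hdepth⟩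
      refine ⟨hdeg, Prod.Lex.toLex_lt_toLex.2 (Or.inl ?_)⟩
      have := hr y.1
      have := y.2.is_le
      rw [depth_add_single]
      omega
    by_cases hy : y = x₀
    · subst hy
      have hlead : (J y : ℂ) • F y (mono (J - Pi.single y 1)) = (J y : ℂ) • mono J := by
        rcases eq_or_ne (J y) 0 with h | h
        · simp [h]
        · rw [← hstep, tsub_single_add_single h]
      convert add_mem hF hHJ using 1
      simp only [hE, add_tsub_cancel_right, map_sub, map_smul, mul_smul, hlead, Pi.add_apply,
        Pi.single_eq_same, Nat.cast_add, Nat.cast_one]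
      module
    · have hdiag : gam y • mono J ∈ L := by
        refine smul_mem _ _ (subset_span ⟨J, ⟨rfl, ?_⟩, rfl⟩)
        rw [key_add_single, if_neg hy]
        exact lt_add_of_pos_right _
          (Prod.Lex.toLex_strictMono (Prod.mk_lt_mk_of_le_of_lt (Nat.zero_le _) one_pos))
      convert add_mem (add_mem hF hHJ) hdiag using 1
      rw [hE, add_single_tsub_single_of_ne J hy, hstep]
      simp only [Pi.add_apply, Pi.single_eq_of_ne' hy, add_zero, map_sub, map_smul]
      abel

theorem map_span_sum_eq_succ {x₀ : Mode r} (hx₀ : (x₀.2 : ℕ) = r x₀.1) {c : ℂ} (hc : c ≠ 0)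
    (hlower : ∀ J : Mode r → ℕ, E (mono J) - (c * J x₀) • mono (J - Pi.single x₀ 1) ∈
      span ℂ (mono '' {K | ∑ z, K z + 1 = ∑ z, J z ∧ key r x₀ K < key r x₀ J})) (m : ℕ) :
    (span ℂ (mono '' {J | ∑ z, J z = m + 1})).map E = span ℂ (mono '' {J | ∑ z, J z = m}) := by
  apply le_antisymm
  · rw [map_span, span_le]
    rintro - ⟨-, ⟨J, hJ : ∑ z, J z = m + 1, rfl⟩, rfl⟩
    have hlead : (c * J x₀) • mono (J - Pi.single x₀ 1) ∈
        span ℂ (mono '' {J | ∑ z, J z = m}) := by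
      rcases eq_or_ne (J x₀) 0 with h | h
      · simp [h]
      · refine smul_mem _ _ (subset_span ⟨_, ?_, rfl⟩)
        have := sum_add_single_one (J - Pi.single x₀ 1) x₀
        rw [tsub_single_add_single h] at this
        change ∑ z, (J - Pi.single x₀ 1 : Mode r → ℕ) z = m
        omega
    have hrest : E (mono J) - (c * J x₀) • mono (J - Pi.single x₀ 1) ∈
        span ℂ (mono '' {J | ∑ z, J z = m}) := by
      refine span_mono (Set.image_mono ?_) (hlower J)
      rintro K ⟨hK, -⟩
      change ∑ z, K z = m
      omega
    simpa using add_mem hrest hlead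
  · refine span_image_le_of_mem_sup_span_lt (key r x₀) fun J (hJ : ∑ z, J z = m) => ?_
    have hc' : c * ((J x₀ + 1 : ℕ) : ℂ) ≠ 0 :=
      mul_ne_zero hc (Nat.cast_ne_zero.2 (J x₀).succ_ne_zero)
    have h := hlower (J + Pi.single x₀ 1)
    simp only [sum_add_single_one, add_left_inj, hJ, key_add_single, hx₀, tsub_self, if_pos,
      Prod.mk_zero_zero, toLex_zero, add_zero, add_tsub_cancel_right] at h
    simp only [Pi.add_apply, Pi.single_eq_same] at h
    have hE : E (mono (J + Pi.single x₀ 1)) ∈ (span ℂ (mono '' {J | ∑ z, J z = m + 1})).map E :=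
      mem_map_of_mem (subset_span ⟨_, (sum_add_single_one J x₀).trans (congrArg (· + 1) hJ), rfl⟩)
    rw [← smul_mem_iff _ hc']
    simpa using sub_mem (mem_sup_left hE) (mem_sup_right h)

end ConfluentVerma

/-- the space of singular vectors of weight `|Λ| - 2m` in a tensor product
`M^{(r₁)}_{λ₁}(γ₁) ⊗ ⋯ ⊗ M^{(rₙ)}_{λₙ}(γₙ)` of confluent Verma modules has dimension
`C(|R|+n+m-2, m)`, provided `γ₁^{(r₁)} ≠ 0`.

The tensor product of confluent Verma modules is axiomatized: `V` is a vector space with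
commuting lowering operators `F_x` (for `x = (i,p)`, `i = 1,…,n`, `p = 0,…,rᵢ`), Cartan
operators `H_x`, the diagonal raising operator `E = ∑ᵢ E_{i,0}`, and a highest weight
vector `v` with `E v = 0` and `H_x v = γ_x v` (so `γ_{(i,0)} = λᵢ`), satisfying the
truncated current algebra relations `[E, F_x] = H_x` and
`[H_{(i,p)}, F_{(j,q)}] = -2 δ_{ij} F_{(i,p+q)}` (zero when `p+q > rᵢ`), and such that
the monomials `F^J v` form a basis of `V`.  The singular space is the intersection of
the span of the monomials of total degree `m` with the kernel of `E`. -/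
theorem stmt_11 (n : ℕ) (hn : 0 < n) (r : Fin n → ℕ) (hr : ∀ i, 0 < r i) (m : ℕ)
    (V : Type*) [AddCommGroup V] [Module ℂ V]
    (E : Module.End ℂ V)
    (F H : (Σ i : Fin n, Fin (r i + 1)) → Module.End ℂ V)
    (v : V) (gam : (Σ i : Fin n, Fin (r i + 1)) → ℂ)
    (hEv : E v = 0)
    (hHv : ∀ x, H x v = gam x • v)
    (hgam : gam ⟨⟨0, hn⟩, Fin.last (r ⟨0, hn⟩)⟩ ≠ 0)
    (hEF : ∀ x, E * F x - F x * E = H x)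
    (hHF : ∀ (i j : Fin n) (p : Fin (r i + 1)) (q : Fin (r j + 1)),
      H ⟨i, p⟩ * F ⟨j, q⟩ - F ⟨j, q⟩ * H ⟨i, p⟩ =
        if h : i = j ∧ (p : ℕ) + (q : ℕ) ≤ r i then
          (-2 : ℂ) • F ⟨i, ⟨(p : ℕ) + (q : ℕ), by have := h.2; omega⟩⟩
        else 0)
    (mono : ((Σ i : Fin n, Fin (r i + 1)) → ℕ) → V)
    (hmono0 : mono 0 = v)
    (hmonoStep : ∀ J x, mono (Function.update J x (J x + 1)) = F x (mono J))
    (hLI : LinearIndependent ℂ mono) :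
    Module.finrank ℂ
        ↥(Submodule.span ℂ (mono '' {J | ∑ x, J x = m}) ⊓ LinearMap.ker E) =
      Nat.choose ((∑ i, r i) + n + m - 2) m := by
  have hstep : ∀ (J : (Σ i : Fin n, Fin (r i + 1)) → ℕ) x,
      mono (J + Pi.single x 1) = F x (mono J) := fun J x => by
    rw [← update_succ_eq_add_single, hmonoStep]
  have hrank := finrank_span_image_setOf_sum_eq hLI
  simp only [Fintype.card_sigma, Fintype.card_fin, sum_add_distrib, sum_const, card_univ,
    smul_eq_mul, mul_one] at hrank
  rcases m with _ | m
  · rw [inf_eq_left.2 (span_setOf_sum_eq_zero_le_ker (hmono0 ▸ hEv)), hrank]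
    simp
  · have : FiniteDimensional ℂ (span ℂ (mono '' {J | ∑ z, J z = m + 1})) :=
      FiniteDimensional.span_of_finite ℂ ((finite_setOf_sum_eq (m + 1)).image mono)
    have hsplit := finrank_map_add_finrank_inf_ker E (span ℂ (mono '' {J | ∑ z, J z = m + 1}))
    have hlower := ConfluentVerma.E_mono_sub_smul_mem hr hEv hEF hmono0 hstep
      (ConfluentVerma.H_mono_sub_smul_mem hHv hHF hmono0 hstep) ⟨⟨0, hn⟩, Fin.last _⟩
    have hN : 2 ≤ ∑ i, r i + n := by
      have := (hr ⟨0, hn⟩).trans_le (single_le_sum (fun i _ => (r i).zero_le) (mem_univ _))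
      omega
    rw [ConfluentVerma.map_span_sum_eq_succ rfl hgam hlower, hrank, hrank,
      Nat.choose_add_succ_sub_one hN] at hsplit
    omega
end

section
/- In the framed Burau representation $M_n^{(r)}$ of $FB_n$, the submodule $N_n^{(r)}$ spanned by $\{b_i^{(s)}\}$ is invariant under the action of $FB_n$, and the quotient action on $M_n^{(r)}/N_n^{(r)}$ (with basis the images of $a_1,\dots,a_n$) is given by $\sigma_i\cdot a_i=(1-q)a_i+qa_{i+1}$, $\sigma_i\cdot a_{i+1}=a_i$, $\tau_j\cdot a_k=a_k$, i.e., it is the (unreduced) Burau representation of $B_n$ extended trivially on the $\tau_j$. -/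
noncomputable section

open LaurentPolynomial Finsupp

/-- The ground ring `ℤ[q^{±1}]`. -/
abbrev RB : Type := LaurentPolynomial ℤ

/-- The variable `q`. -/
def qq : RB := LaurentPolynomial.T 1

/-- The index type for the basis `a_1,…,a_n` (left) and `b_i^{(s)}` (right, with
`s : Fin r` encoding the superscript `s+1 ∈ {1,…,r}`). -/
abbrev BurauIdx (n r : ℕ) := Fin n ⊕ Fin n × Fin r

/-- The free `ℤ[q^{±1}]`-module `M_n^{(r)}` of rank `n + rn`. -/
abbrev BurauMod (n r : ℕ) := BurauIdx n r →₀ RB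

/-- The framed Burau action of the generator `σ_i` on basis vectors. -/
def sigmaBasis {n r : ℕ} (i : Fin (n - 1)) : BurauIdx n r → BurauMod n r
  | .inl k =>
      if k = lo i then
        (1 - qq) • single (Sum.inl (lo i)) (1 : RB) + qq • single (Sum.inl (hi i)) (1 : RB)
          - ∑ s : Fin r, single (Sum.inr (lo i, s)) (1 : RB)
      else if k = hi i then single (Sum.inl (lo i)) (1 : RB)
      else single (Sum.inl k) (1 : RB)
  | .inr (k, s) =>
      if k = lo i then qq • single (Sum.inr (hi i, s)) (1 : RB)
      else if k = hi i then single (Sum.inr (lo i, s)) (1 : RB)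
      else single (Sum.inr (k, s)) (1 : RB)

/-- The framed Burau action of the generator `τ_j` on basis vectors. -/
def tauBasis {n r : ℕ} (hr : 0 < r) (j : Fin n) : BurauIdx n r → BurauMod n r
  | .inl k =>
      if k = j then
        single (Sum.inl j) (1 : RB) - qq • single (Sum.inr (j, ⟨r - 1, by omega⟩)) (1 : RB)
      else single (Sum.inl k) (1 : RB)
  | .inr (k, s) =>
      if k = j then
        if (s : ℕ) = 0 then qq • single (Sum.inr (j, ⟨r - 1, by omega⟩)) (1 : RB)
        else single (Sum.inr (j, ⟨(s : ℕ) - 1, by have := s.2; omega⟩)) (1 : RB)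
      else single (Sum.inr (k, s)) (1 : RB)

/-- The linear operator on `M_n^{(r)}` assigned to `σ_i`. -/
def sigmaMap {n r : ℕ} (i : Fin (n - 1)) : BurauMod n r →ₗ[RB] BurauMod n r :=
  Finsupp.linearCombination RB (sigmaBasis i)

/-- The linear operator on `M_n^{(r)}` assigned to `τ_j`. -/
def tauMap {n r : ℕ} (hr : 0 < r) (j : Fin n) : BurauMod n r →ₗ[RB] BurauMod n r :=
  Finsupp.linearCombination RB (tauBasis hr j)


/-- The submodule `N_n^{(r)}` spanned by the `b_i^{(s)}`. -/
def Nsub (n r : ℕ) : Submodule RB (BurauMod n r) :=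
  Submodule.span RB (Set.range fun x : Fin n × Fin r => single (Sum.inr x) (1 : RB))

/-- the submodule `N_n^{(r)}` spanned by the `b_i^{(s)}` is invariant
under `FB_n`, and the quotient action on `M_n^{(r)}/N_n^{(r)}` (basis the images of the
`a_k`) is given by `σ_i·a_i = (1-q)a_i + q a_{i+1}`, `σ_i·a_{i+1} = a_i`,
`σ_i·a_k = a_k` otherwise, and `τ_j·a_k = a_k`: the Burau representation of `B_n`
extended trivially on the `τ_j`. -/
theorem stmt_16 (n r : ℕ) (hr : 0 < r) :
    (∀ i : Fin (n - 1), (Nsub n r).map (sigmaMap i) ≤ Nsub n r) ∧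
    (∀ j : Fin n, (Nsub n r).map (tauMap hr j) ≤ Nsub n r) ∧
    (∀ i : Fin (n - 1),
      sigmaMap (n := n) (r := r) i (single (Sum.inl (lo i)) 1) -
        ((1 - qq) • single (Sum.inl (lo i)) 1 + qq • single (Sum.inl (hi i)) 1) ∈
          Nsub n r) ∧
    (∀ i : Fin (n - 1),
      sigmaMap (n := n) (r := r) i (single (Sum.inl (hi i)) 1) =
        single (Sum.inl (lo i)) 1) ∧
    (∀ (i : Fin (n - 1)) (k : Fin n), k ≠ lo i → k ≠ hi i →
      sigmaMap (n := n) (r := r) i (single (Sum.inl k) 1) = single (Sum.inl k) 1) ∧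
    (∀ (j k : Fin n),
      tauMap (n := n) (r := r) hr j (single (Sum.inl k) 1) - single (Sum.inl k) 1 ∈
        Nsub n r) := by
  have hsig : ∀ (i : Fin (n-1)) (x : BurauIdx n r),
      sigmaMap (n:=n) (r:=r) i (single x 1) = sigmaBasis i x := by
    intro i x
    simp [sigmaMap, Finsupp.linearCombination_single]
  have htau : ∀ (j : Fin n) (x : BurauIdx n r),
      tauMap (n:=n) (r:=r) hr j (single x 1) = tauBasis hr j x := by
    intro j x
    simp [tauMap, Finsupp.linearCombination_single]
  have hmem : ∀ x : Fin n × Fin r, single (Sum.inr x) (1:RB) ∈ Nsub n r := fun x =>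
    Submodule.subset_span ⟨x, rfl⟩
  have hne : ∀ i : Fin (n-1), hi (n:=n) i ≠ lo i := by
    intro i h
    have := congrArg Fin.val h
    simp [hi, lo] at this
  refine ⟨?_, ?_, ?_, ?_, ?_, ?_⟩
  · intro i
    rw [Submodule.map_le_iff_le_comap, Nsub, Submodule.span_le]
    rintro _ ⟨x, rfl⟩
    simp only [SetLike.mem_coe, Submodule.mem_comap, hsig]
    unfold sigmaBasis
    dsimp only
    obtain ⟨k, s⟩ := x
    split_ifs <;> first
      | exact Submodule.smul_mem _ _ (hmem _)
      | exact hmem _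
  · intro j
    rw [Submodule.map_le_iff_le_comap, Nsub, Submodule.span_le]
    rintro _ ⟨x, rfl⟩
    simp only [SetLike.mem_coe, Submodule.mem_comap, htau]
    unfold tauBasis
    dsimp only
    obtain ⟨k, s⟩ := x
    split_ifs <;> first
      | exact Submodule.smul_mem _ _ (hmem _)
      | exact hmem _
  · intro i
    rw [hsig]
    unfold sigmaBasis
    dsimp only
    rw [if_pos rfl]
    have : (1 - qq) • single (Sum.inl (lo i)) (1:RB) + qq • single (Sum.inl (hi i)) (1:RB)
        - (∑ s : Fin r, single (Sum.inr (lo (n:=n) i, s)) (1:RB))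
        - ((1 - qq) • single (Sum.inl (lo i)) 1 + qq • single (Sum.inl (hi i)) 1)
        = - ∑ s : Fin r, single (Sum.inr (lo (n:=n) i, s)) (1:RB) := by abel
    rw [this]
    exact neg_mem (Submodule.sum_mem _ fun s _ => hmem _)
  · intro i
    rw [hsig]
    unfold sigmaBasis
    dsimp only
    rw [if_neg (hne i), if_pos rfl]
  · intro i k h1 h2
    rw [hsig]
    unfold sigmaBasis
    dsimp only
    rw [if_neg h1, if_neg h2]
  · intro j k
    rw [htau]
    unfold tauBasis
    dsimp only
    by_cases h : k = j
    · rw [if_pos h]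
      subst h
      have : single (Sum.inl k) (1:RB) - qq • single (Sum.inr (k, (⟨r-1, by omega⟩ : Fin r))) (1:RB)
          - single (Sum.inl k) 1
          = - (qq • single (Sum.inr (k, (⟨r-1, by omega⟩ : Fin r))) (1:RB)) := by abel
      rw [this]
      exact neg_mem (Submodule.smul_mem _ _ (hmem _))
    · rw [if_neg h, sub_self]
      exact zero_mem _

end
end
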